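/- arXiv:1310.5132 — 3 statements merged into one kernel-verified Lean document; each statement's English description precedes it below -/
import Mathlib

section
/- (Universal Cauchy formula) Let A be a commutative B_r-algebra and let φ = Σ_{n≥0} a_n t^n/n! ∈ A[[t]] satisfy (D^r − e_1 D^{r-1} + … + (−1)^r e_r)φ = 0. Then φ = U_0(φ) u_0 + U_1(φ) u_{-1} + … + U_{r-1}(φ) u_{-r+1} in A[[t]]. -/
/-!
Under the exponential normalization `a_n ↦ a_n / n!` the formal derivative becomes the shift, so
the differential equation says that `a` satisfies the linear recurrence `Σ (-1)^i e_i a_{n+r-i} = 0`.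
For the ordinary generating series `ψ = Σ a_n t^n` and `E = Σ (-1)^i e_i t^i` this means that
`E ψ = P` is a polynomial of degree `< r`, whose coefficients are `U_0(φ), …, U_{r-1}(φ)`.
Since `E · Σ h_n t^n = 1`, we get `ψ = P · Σ h_n t^n`, i.e. `a_n = Σ_{k<r} U_k(φ) h_{n-k}`, which is
the claim read coefficientwise.
-/

open Finset PowerSeries

namespace PowerSeries

variable {A : Type*} [CommRing A]

theorem coeff_sum_C_mul_X_pow_mul (s : Finset ℕ) (c : ℕ → A) (ψ : A⟦X⟧) (n : ℕ) :
    coeff n ((∑ i ∈ s, C (c i) * X ^ i) * ψ) =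
      ∑ i ∈ s, if i ≤ n then c i * coeff (n - i) ψ else 0 := by
  simp only [sum_mul, map_sum, mul_assoc, coeff_C_mul, coeff_X_pow_mul', mul_ite, mul_zero]

theorem coeff_sum_C_mul_X_pow_mul_mk {s : Finset ℕ} (c : ℕ → A) {h : ℤ → A}
    (hneg : ∀ m < 0, h m = 0) (n : ℕ) :
    coeff n ((∑ i ∈ s, C (c i) * X ^ i) * mk fun m : ℕ => h m) = ∑ i ∈ s, c i * h (n - i) := by
  rw [coeff_sum_C_mul_X_pow_mul]
  refine sum_congr rfl fun i _ => ?_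
  split_ifs with hi
  · rw [coeff_mk, Nat.cast_sub hi]
  · rw [hneg _ (by omega), mul_zero]

theorem mk_eq_mul_of_recurrence {r : ℕ} {c : ℕ → A} {H : A⟦X⟧}
    (hH : (∑ i ∈ range (r + 1), C (c i) * X ^ i) * H = 1) {a : ℕ → A}
    (hrec : ∀ n, ∑ i ∈ range (r + 1), c i * a (n + (r - i)) = 0) :
    mk a = (∑ k ∈ range r, C (∑ l ∈ range (k + 1), c l * a (k - l)) * X ^ k) * H := by
  set E := ∑ i ∈ range (r + 1), C (c i) * X ^ i
  have hE : E * mk a = ∑ k ∈ range r, C (∑ l ∈ range (k + 1), c l * a (k - l)) * X ^ k := by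
    ext n
    rw [coeff_sum_C_mul_X_pow_mul, map_sum]
    simp only [coeff_mk, coeff_C_mul_X_pow]
    rw [sum_ite_eq, ← sum_filter]
    rcases lt_or_ge n r with hn | hn
    · rw [if_pos (mem_range.2 hn)]
      congr 1
      ext i
      simp only [mem_filter, mem_range]
      omega
    · rw [if_neg (by simpa using hn),
        filter_true_of_mem fun i hi => by rw [mem_range] at hi; omega, ← hrec (n - r)]
      refine sum_congr rfl fun i hi => ?_
      rw [mem_range] at hi
      congr 2
      omega
  calc mk a = mk a * (E * H) := by rw [hH, mul_one]
    _ = E * mk a * H := by ring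
    _ = _ := by rw [hE]

/-- The exponential generating series `Σ a_n t^n / n!`, where `1 / n!` is read in `A` through `g`. -/
noncomputable def egf (g : ℚ →+* A) : (ℕ → A) →ₗ[A] A⟦X⟧ where
  toFun a := mk fun n => g (n.factorial : ℚ)⁻¹ * a n
  map_add' a b := by
    ext
    simp only [Pi.add_apply, mul_add, coeff_mk, map_add]
  map_smul' c a := by
    ext
    simp only [Pi.smul_apply, smul_eq_mul, coeff_mk, map_smul, RingHom.id_apply]
    ring

variable (g : ℚ →+* A)

theorem coeff_egf (a : ℕ → A) (n : ℕ) : coeff n (egf g a) = g (n.factorial : ℚ)⁻¹ * a n := by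
  simp [egf]

theorem egf_injective : Function.Injective (egf g) := by
  intro a b hab
  funext n
  have hunit : IsUnit (g (n.factorial : ℚ)⁻¹) :=
    (isUnit_iff_ne_zero.2 (inv_ne_zero (by exact_mod_cast n.factorial_ne_zero))).map g
  exact hunit.mul_left_cancel (by rw [← coeff_egf, ← coeff_egf, hab])

theorem iterate_derivative_egf (a : ℕ → A) (k : ℕ) :
    (d⁄dX A)^[k] (egf g a) = egf g fun n => a (n + k) := by
  ext n
  have hfact : ((n + 1).ascFactorial k : ℚ) * ((n + k).factorial : ℚ)⁻¹ = (n.factorial : ℚ)⁻¹ := by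
    have hasc : ((n + 1).ascFactorial k : ℚ) ≠ 0 := by exact_mod_cast (Nat.ascFactorial_pos _ _).ne'
    rw [← Nat.factorial_mul_ascFactorial, Nat.cast_mul, mul_inv, mul_left_comm,
      mul_inv_cancel₀ hasc, mul_one]
  rw [coeff_iterate_derivative, coeff_egf, coeff_egf, ← hfact, map_mul, map_natCast, mul_assoc]

theorem recurrence_of_sum_C_mul_iterate_derivative_egf {r : ℕ} {c : ℕ → A} {a : ℕ → A}
    (hode : ∑ i ∈ range (r + 1), C (c i) * (d⁄dX A)^[r - i] (egf g a) = 0) (n : ℕ) :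
    ∑ i ∈ range (r + 1), c i * a (n + (r - i)) = 0 := by
  simp only [iterate_derivative_egf, ← smul_eq_C_mul, ← map_smul, ← map_sum] at hode
  simpa using congrFun (egf_injective g (hode.trans (map_zero _).symm)) n

end PowerSeries

theorem stmt_4_general (r : ℕ)
    (e : ℕ → MvPolynomial (Fin r) ℚ)
    (h : ℤ → MvPolynomial (Fin r) ℚ)
    (hhneg : ∀ n : ℤ, n < 0 → h n = 0)
    (hconv : ∀ n : ℤ,
      ∑ i ∈ Finset.range (r + 1),
          (-1 : MvPolynomial (Fin r) ℚ) ^ i * e i * h (n - (i : ℤ)) =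
        if n = 0 then 1 else 0)
    (u : ℤ → PowerSeries (MvPolynomial (Fin r) ℚ))
    (hu : ∀ j : ℤ, u j = PowerSeries.mk fun n : ℕ => (n.factorial : ℚ)⁻¹ • h ((n : ℤ) + j))
    (A : Type) [CommRing A] [Algebra (MvPolynomial (Fin r) ℚ) A]
    (a : ℕ → A)
    (φ : PowerSeries A)
    (hφ : φ = PowerSeries.mk fun n : ℕ =>
      algebraMap (MvPolynomial (Fin r) ℚ) A (MvPolynomial.C ((n.factorial : ℚ)⁻¹)) * a n)
    (D : PowerSeries A → PowerSeries A)
    (hD : ∀ ψ : PowerSeries A, D ψ = PowerSeries.mk fun n : ℕ =>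
      ((n : A) + 1) * PowerSeries.coeff (n + 1) ψ)
    (hode : ∑ i ∈ Finset.range (r + 1),
        PowerSeries.C ((-1 : A) ^ i * algebraMap (MvPolynomial (Fin r) ℚ) A (e i)) * D^[r - i] φ = 0) :
    φ = ∑ i ∈ Finset.range r,
      PowerSeries.C (∑ l ∈ Finset.range (i + 1),
          (-1 : A) ^ l * algebraMap (MvPolynomial (Fin r) ℚ) A (e l) * a (i - l)) *
        PowerSeries.map (algebraMap (MvPolynomial (Fin r) ℚ) A) (u (-(i : ℤ))) := by
  set f := algebraMap (MvPolynomial (Fin r) ℚ) A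
  set g : ℚ →+* A := f.comp MvPolynomial.C
  have hφ' : φ = egf g a := hφ
  have hD' : D = d⁄dX A := funext fun ψ => by
    ext n
    rw [hD, coeff_mk, coeff_derivative, mul_comm]
  have hu' (j : ℤ) : map f (u j) = egf g fun n => f (h (n + j)) := by
    ext n
    rw [hu, coeff_map, coeff_mk, coeff_egf, MvPolynomial.smul_eq_C_mul, map_mul]
    rfl
  have hneg (m : ℤ) (hm : m < 0) : f (h m) = 0 := by rw [hhneg m hm, map_zero]
  have hH : (∑ i ∈ range (r + 1), C ((-1 : A) ^ i * f (e i)) * X ^ i) *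
      (mk fun n : ℕ => f (h n)) = 1 := by
    ext n
    rw [coeff_sum_C_mul_X_pow_mul_mk _ hneg, coeff_one]
    simpa [mul_assoc] using congrArg f (hconv n)
  have hser := mk_eq_mul_of_recurrence hH
    (recurrence_of_sum_C_mul_iterate_derivative_egf g (hD' ▸ hφ' ▸ hode))
  have ha (n : ℕ) : a n = ∑ k ∈ range r,
      (∑ l ∈ range (k + 1), (-1 : A) ^ l * f (e l) * a (k - l)) * f (h ((n : ℤ) - k)) := by
    simpa only [coeff_mk, coeff_sum_C_mul_X_pow_mul_mk _ hneg] using congrArg (coeff n) hser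
  simp only [hu', ← smul_eq_C_mul, ← map_smul, ← map_sum]
  rw [hφ']
  congr 1
  funext n
  rw [ha n]
  simp [sub_eq_add_neg]

theorem stmt_4 (r : ℕ) (hr : 1 ≤ r)
    (e : ℕ → MvPolynomial (Fin r) ℚ)
    (he0 : e 0 = 1)
    (heX : ∀ i : Fin r, e ((i : ℕ) + 1) = MvPolynomial.X i)
    (heTop : ∀ i : ℕ, r < i → e i = 0)
    (h : ℤ → MvPolynomial (Fin r) ℚ)
    (hhneg : ∀ n : ℤ, n < 0 → h n = 0)
    (hconv : ∀ n : ℤ,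
      ∑ i ∈ Finset.range (r + 1),
          (-1 : MvPolynomial (Fin r) ℚ) ^ i * e i * h (n - (i : ℤ)) =
        if n = 0 then 1 else 0)
    (u : ℤ → PowerSeries (MvPolynomial (Fin r) ℚ))
    (hu : ∀ j : ℤ, u j = PowerSeries.mk fun n : ℕ => (n.factorial : ℚ)⁻¹ • h ((n : ℤ) + j))
    (A : Type) [CommRing A] [Algebra (MvPolynomial (Fin r) ℚ) A]
    (a : ℕ → A)
    (φ : PowerSeries A)
    (hφ : φ = PowerSeries.mk fun n : ℕ =>
      algebraMap (MvPolynomial (Fin r) ℚ) A (MvPolynomial.C ((n.factorial : ℚ)⁻¹)) * a n)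
    (D : PowerSeries A → PowerSeries A)
    (hD : ∀ ψ : PowerSeries A, D ψ = PowerSeries.mk fun n : ℕ =>
      ((n : A) + 1) * PowerSeries.coeff (n + 1) ψ)
    (hode : ∑ i ∈ Finset.range (r + 1),
        PowerSeries.C ((-1 : A) ^ i * algebraMap (MvPolynomial (Fin r) ℚ) A (e i)) * D^[r - i] φ = 0) :
    φ = ∑ i ∈ Finset.range r,
      PowerSeries.C (∑ l ∈ Finset.range (i + 1),
          (-1 : A) ^ l * algebraMap (MvPolynomial (Fin r) ℚ) A (e l) * a (i - l)) *
        PowerSeries.map (algebraMap (MvPolynomial (Fin r) ℚ) A) (u (-(i : ℤ))) :=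
  stmt_4_general r e h hhneg hconv u hu A a φ hφ D hD hode
end

section
/- Let s ≤ r and let i_1, …, i_s be positive integers. Suppose h_{i_1}·…·h_{i_s} = Σ_{λ} a_λ Δ_λ(H_r) is the expansion in the Schur basis, where λ ranges over partitions with at most r parts and a_λ ∈ ℚ. Then, with v an indeterminate, ∏_{j=1}^{s} (h_{i_j} − v·h_{i_j−1}) = Σ_{λ} a_λ · (Σ_{m=0}^{r} (−1)^m v^m Δ_{λ−m}(H_r)) in B_r[v]. (Equivalently, the ℚ-linear map on B_r defined on the Schur basis by Δ_λ(H_r) ↦ Σ_m (−1)^m v^m Δ_{λ−m}(H_r) is multiplicative on products of at most r of the elements h_n.) -/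
/-!
Send `e_i` to the `i`-th elementary symmetric polynomial in `x_1, …, x_r`. This map is injective,
and it turns `h_n` into the complete homogeneous symmetric polynomial. Expanding a Schur
determinant multilinearly in its columns shows that `Σ_m (-1)^m v^m Δ_{λ-m}` is the Schur
determinant `Δ_λ` of the sequence `h_n - v h_{n-1}`, because the terms where `λ` minus a vertical
strip is not a partition vanish. So both sides of the identity are polynomials in `v` of degree
at most `r`, the left side being a product of `s ≤ r` linear factors. At `v = 0` they agree by
hypothesis. At `v = x_k`, the sequence `h_n - x_k h_{n-1}` is the image of `h_n` under the ring
map `x_k ↦ 0`, so both sides are images of the two sides of the given Schur expansion. Two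
polynomials of degree at most `r` that agree at the `r + 1` points `0, x_1, …, x_r` are equal.
-/

noncomputable def schurDet {R : Type*} [CommRing R] {r : ℕ} (a : ℤ → R) (lam : Fin r → ℤ) : R :=
  Matrix.det (Matrix.of fun i j : Fin r => a (lam j - ((j : ℕ) : ℤ) + ((i : ℕ) : ℤ)))

open Classical in
/-- `Δ_{λ−j}(a)`: sum of `Δ_μ(a)` over all partitions obtained from `λ` by
subtracting a vertical strip of size `j` (i.e. subtracting `0/1` from each part). -/
noncomputable def stripSumSub {R : Type*} [CommRing R] {r : ℕ} (a : ℤ → R) (lam : Fin r → ℕ)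
    (j : ℕ) : R :=
  ∑ S ∈ Finset.powersetCard j (Finset.univ : Finset (Fin r)),
    if (∀ k l : Fin r, k ≤ l →
          ((lam l : ℤ) - (if l ∈ S then 1 else 0)) ≤ ((lam k : ℤ) - (if k ∈ S then 1 else 0))) ∧
        (∀ k : Fin r, (0 : ℤ) ≤ (lam k : ℤ) - (if k ∈ S then 1 else 0))
    then schurDet a (fun k => (lam k : ℤ) - (if k ∈ S then 1 else 0))
    else 0

open Finset
open scoped Matrix

theorem Matrix.det_of_add_smul_eq_sum {n R : Type*} [Fintype n] [DecidableEq n] [CommRing R]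
    (A B : n → n → R) (c : R) :
    (Matrix.of (A + c • B)).det =
      ∑ S : Finset n, c ^ #S * (Matrix.of (S.piecewise B A)).det := by
  rw [add_comm]
  change Matrix.detRowAlternating.toMultilinearMap (c • B + A) = _
  rw [MultilinearMap.map_add_univ]
  refine sum_congr rfl fun S _ => ?_
  have hpiece : S.piecewise (c • B) A =
      S.piecewise (fun i => c • S.piecewise B A i) (S.piecewise B A) := by
    ext i : 1
    by_cases hi : i ∈ S <;> simp [hi]
  rw [hpiece, MultilinearMap.map_piecewise_smul, prod_const, smul_eq_mul]
  rfl

def stripShift {r : ℕ} (μ : Fin r → ℤ) (S : Finset (Fin r)) : Fin r → ℤ :=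
  fun k => μ k - if k ∈ S then 1 else 0

section SchurDet

variable {R : Type*} [CommRing R] {r : ℕ}

theorem schurDet_map {S : Type*} [CommRing S] (f : R →+* S) (a : ℤ → R) (μ : Fin r → ℤ) :
    f (schurDet a μ) = schurDet (f ∘ a) μ := by
  rw [schurDet, RingHom.map_det]
  rfl

theorem schurDet_sub_mul_shift (a : ℤ → R) (c : R) (μ : Fin r → ℤ) :
    schurDet (fun n => a n - c * a (n - 1)) μ =
      ∑ S : Finset (Fin r), (-c) ^ #S * schurDet a (stripShift μ S) := by
  have hsplit : (Matrix.of fun i j : Fin r => a (μ j - j + i) - c * a (μ j - j + i - 1))ᵀ =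
      Matrix.of ((fun j i : Fin r => a (μ j - j + i)) +
        (-c) • fun j i : Fin r => a (μ j - 1 - j + i)) := by
    ext j i
    simp only [Matrix.transpose_apply, Matrix.of_apply, Pi.add_apply, Pi.smul_apply,
      smul_eq_mul]
    rw [show μ j - 1 - j + i = μ j - j + i - 1 by ring]
    ring
  rw [schurDet, ← Matrix.det_transpose, hsplit, Matrix.det_of_add_smul_eq_sum]
  refine sum_congr rfl fun S _ => ?_
  rw [schurDet, ← Matrix.det_transpose]
  congr 3
  ext j i
  by_cases hj : j ∈ S <;> simp [stripShift, hj, sub_right_comm]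

theorem schurDet_eq_zero_of_succ_eq (a : ℤ → R) (μ : Fin r → ℤ) {j j' : Fin r}
    (hj : (j' : ℕ) = j + 1) (hμ : μ j' = μ j + 1) : schurDet a μ = 0 :=
  Matrix.det_zero_of_column_eq (i := j) (j := j') (Fin.ne_of_lt (by omega)) fun i => by
    simp only [Matrix.of_apply]
    congr 1
    omega

theorem schurDet_eq_zero_of_last_neg (a : ℤ → R) (ha : ∀ n < 0, a n = 0) (μ : Fin r → ℤ)
    {j : Fin r} (hj : (j : ℕ) + 1 = r) (hμ : μ j < 0) : schurDet a μ = 0 :=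
  Matrix.det_eq_zero_of_column_eq_zero j fun i => by
    simp only [Matrix.of_apply]
    exact ha _ (by omega)

-- Since `lam` is antitone, a descent of `lam - 1_S` between adjacent rows forces two equal
-- columns; an antitone `lam - 1_S` with a negative part has a zero last column.
theorem schurDet_stripShift_eq_zero (a : ℤ → R) (ha : ∀ n < 0, a n = 0) {lam : Fin r → ℕ}
    (hlam : Antitone lam) (S : Finset (Fin r))
    (h : ¬ (Antitone (stripShift (fun k => (lam k : ℤ)) S) ∧
      ∀ k, 0 ≤ stripShift (fun k => (lam k : ℤ)) S k)) :
    schurDet a (stripShift (fun k => (lam k : ℤ)) S) = 0 := by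
  set μ := stripShift (fun k => (lam k : ℤ)) S
  cases r with
  | zero => exact absurd ⟨fun k => k.elim0, fun k => k.elim0⟩ h
  | succ n =>
    by_cases hμ : Antitone μ
    · obtain ⟨k, hk⟩ : ∃ k, μ k < 0 := by simpa [hμ] using h
      exact schurDet_eq_zero_of_last_neg a ha μ (j := Fin.last n) rfl
        ((hμ (Fin.le_last k)).trans_lt hk)
    · obtain ⟨i, hi⟩ : ∃ i : Fin n, μ i.castSucc < μ i.succ := by
        simpa [Fin.antitone_iff_succ_le] using hμ
      have hlam_i := hlam (Fin.castSucc_le_succ i)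
      refine schurDet_eq_zero_of_succ_eq a μ (j := i.castSucc) (j' := i.succ) rfl ?_
      simp only [μ, stripShift] at hi ⊢
      split_ifs at hi ⊢ <;> omega

theorem stripSumSub_eq_sum (a : ℤ → R) (ha : ∀ n < 0, a n = 0) {lam : Fin r → ℕ}
    (hlam : Antitone lam) (m : ℕ) :
    stripSumSub a lam m =
      ∑ S ∈ powersetCard m univ, schurDet a (stripShift (fun k => (lam k : ℤ)) S) := by
  refine sum_congr rfl fun S _ => ?_
  split_ifs with h
  · rfl
  · exact (schurDet_stripShift_eq_zero a ha hlam S h).symm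

theorem schurDet_sub_mul_shift_eq_sum_stripSumSub (a : ℤ → R) (ha : ∀ n < 0, a n = 0) (c : R)
    {lam : Fin r → ℕ} (hlam : Antitone lam) :
    schurDet (fun n => a n - c * a (n - 1)) (fun k => (lam k : ℤ)) =
      ∑ m ∈ range (r + 1), (-1) ^ m * c ^ m * stripSumSub a lam m := by
  rw [schurDet_sub_mul_shift, ← sum_fiberwise_of_maps_to (t := range (r + 1)) (g := card)
    fun S _ => mem_range_succ_iff.2 (card_le_univ S |>.trans_eq (Fintype.card_fin r))]
  refine sum_congr rfl fun m _ => ?_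
  rw [stripSumSub_eq_sum a ha hlam, mul_sum, powersetCard_eq_filter, powerset_univ]
  exact sum_congr rfl fun S hS => by rw [(mem_filter.1 hS).2, neg_pow]

end SchurDet

-- Coefficientwise form of `(Σ_{i ≤ r} (-1)^i E_i t^i) · Σ_{n ≥ 0} H_n t^n = 1`.
def IsInvSeries {R : Type*} [CommRing R] (r : ℕ) (E : ℕ → R) (H : ℤ → R) : Prop :=
  (∀ n < 0, H n = 0) ∧
    ∀ n : ℤ, ∑ i ∈ range (r + 1), (-1) ^ i * E i * H (n - i) = if n = 0 then 1 else 0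

namespace IsInvSeries

variable {R : Type*} [CommRing R] {r : ℕ} {E : ℕ → R} {H : ℤ → R}

theorem map {S : Type*} [CommRing S] (f : R →+* S) (hH : IsInvSeries r E H) :
    IsInvSeries r (f ∘ E) (f ∘ H) := by
  refine ⟨fun n hn => by simp [hH.1 n hn], fun n => ?_⟩
  simpa [map_sum, apply_ite f] using congrArg f (hH.2 n)

theorem congr_left {E' : ℕ → R} (hH : IsInvSeries r E H) (hE : ∀ i ≤ r, E i = E' i) :
    IsInvSeries r E' H :=
  ⟨hH.1, fun n => by
    rw [← hH.2 n]
    exact sum_congr rfl fun i hi => by rw [hE i (mem_range_succ_iff.1 hi)]⟩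

theorem unique (hE : E 0 = 1) {G : ℤ → R} (hH : IsInvSeries r E H) (hG : IsInvSeries r E G) :
    H = G := by
  suffices ∀ k : ℕ, ∀ n : ℤ, n < k → H n = G n from
    funext fun n => this (n.toNat + 1) n (by omega)
  intro k
  induction k with
  | zero => exact fun n hn => by rw [hH.1 n hn, hG.1 n hn]
  | succ k ih =>
    intro n hn
    have hHn := hH.2 n
    have hGn := hG.2 n
    rw [sum_range_succ'] at hHn hGn
    rw [sum_congr rfl fun i _ => by rw [ih (n - (i + 1 : ℕ)) (by omega)]] at hHn
    simp only [pow_zero, hE, one_mul, Nat.cast_zero, sub_zero] at hHn hGn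
    linear_combination hHn - hGn

theorem sub_mul_shift (hH : IsInvSeries r E H) {E' : ℕ → R} {c : R} (h0 : E 0 = E' 0)
    (hsucc : ∀ i, E (i + 1) = E' (i + 1) + c * E' i) (htop : E' r = 0) :
    IsInvSeries r E' (fun n => H n - c * H (n - 1)) := by
  refine ⟨fun n hn => by simp [hH.1 n hn, hH.1 (n - 1) (by omega)], fun n => ?_⟩
  set g : ℕ → R := fun i => (-1) ^ i * E' i * H (n - 1 - i)
  have htel : ∑ i ∈ range r, g (i + 1) + g 0 = ∑ i ∈ range r, g i := by
    rw [← sum_range_succ', sum_range_succ, show g r = 0 by simp [g, htop], add_zero]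
  have hterm : ∀ i ∈ range r,
      (-1) ^ (i + 1) * E' (i + 1) * (H (n - (i + 1 : ℕ)) - c * H (n - (i + 1 : ℕ) - 1)) =
        (-1) ^ (i + 1) * E (i + 1) * H (n - (i + 1 : ℕ)) - c * (g (i + 1) - g i) := by
    intro i _
    simp only [g, hsucc]
    rw [show n - ((i + 1 : ℕ) : ℤ) - 1 = n - 1 - ((i + 1 : ℕ) : ℤ) by ring,
      show n - ((i + 1 : ℕ) : ℤ) = n - 1 - (i : ℤ) by push_cast; ring]
    ring
  rw [← hH.2 n, sum_range_succ', sum_range_succ' (fun i => (-1) ^ i * E i * H (n - i)),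
    sum_congr rfl hterm, sum_sub_distrib, ← mul_sum, sum_sub_distrib, h0]
  simp only [g, pow_zero, one_mul, Nat.cast_zero, sub_zero] at htel ⊢
  linear_combination (-c) * htel

end IsInvSeries

namespace Multiset

variable {R : Type*} [CommSemiring R]

theorem esymm_zero_right (s : Multiset R) : s.esymm 0 = 1 := by
  simp [esymm, powersetCard_zero_left]

theorem esymm_cons_succ (a : R) (s : Multiset R) (n : ℕ) :
    (a ::ₘ s).esymm (n + 1) = s.esymm (n + 1) + a * s.esymm n := by
  simp [esymm, powersetCard_cons, map_map, sum_map_mul_left]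

theorem esymm_zero_cons (s : Multiset R) (n : ℕ) : (0 ::ₘ s).esymm n = s.esymm n := by
  cases n with
  | zero => rw [esymm_zero_right, esymm_zero_right]
  | succ n => rw [esymm_cons_succ, zero_mul, add_zero]

end Multiset

namespace MvPolynomial

variable {σ R : Type*} [CommRing R] [DecidableEq σ]

noncomputable def killVar (k : σ) : MvPolynomial σ R →ₐ[R] MvPolynomial σ R :=
  aeval (Function.update X k 0)

variable [Fintype σ]

theorem esymm_eq_esymm_erase (k : σ) (n : ℕ) :
    esymm σ R n = (X k ::ₘ (univ.erase k).val.map X).esymm n := by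
  rw [esymm_eq_multiset_esymm, ← Multiset.map_cons, erase_val, Multiset.cons_erase (mem_univ k)]

theorem killVar_esymm (k : σ) (n : ℕ) :
    killVar k (esymm σ R n) = ((univ.erase k).val.map X).esymm n := by
  rw [killVar, aeval_esymm_eq_multiset_esymm, ← Multiset.cons_erase (mem_univ_val k),
    Multiset.map_cons, Function.update_self, Multiset.esymm_zero_cons, ← erase_val]
  congr 1
  exact Multiset.map_congr rfl fun j hj => Function.update_of_ne (ne_of_mem_erase hj) _ _

theorem esymm_succ_eq_killVar (k : σ) (n : ℕ) :
    esymm σ R (n + 1) = killVar k (esymm σ R (n + 1)) + X k * killVar k (esymm σ R n) := by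
  rw [killVar_esymm, killVar_esymm, esymm_eq_esymm_erase k, Multiset.esymm_cons_succ]

theorem killVar_esymm_card (k : σ) :
    killVar k (esymm σ R (Fintype.card σ)) = (0 : MvPolynomial σ R) := by
  rw [killVar_esymm, Multiset.esymm, Multiset.powersetCard_eq_empty, Multiset.map_zero,
    Multiset.sum_zero]
  simp [Fintype.card_pos_iff.2 ⟨k⟩]

-- Both sides are inverse series of `∏_{j ≠ k} (1 - x_j t)`: the generating series of `H` is
-- `∏_j (1 - x_j t)⁻¹`, and shifting by `x_k` cancels the factor `j = k`.
theorem killVar_of_isInvSeries {H : ℤ → MvPolynomial σ R}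
    (hH : IsInvSeries (Fintype.card σ) (esymm σ R) H) (k : σ) (n : ℤ) :
    killVar k (H n) = H n - X k * H (n - 1) := by
  have hkill := hH.map (killVar (R := R) k).toRingHom
  have hshift := hH.sub_mul_shift (E' := fun i => killVar k (esymm σ R i)) (c := X k)
    (by simp [esymm_zero]) (esymm_succ_eq_killVar k) (killVar_esymm_card k)
  exact congrFun (hkill.unique (by simp [esymm_zero]) hshift) n

theorem aeval_esymm_injective (K : Type*) [CommRing K] (r : ℕ) :
    Function.Injective (aeval (R := K) fun i : Fin r => esymm (Fin r) K (i + 1)) :=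
  fun p q hpq =>
    esymmAlgHom_fin_injective K le_rfl (Subtype.ext (by simpa [esymmAlgHom_apply] using hpq))

end MvPolynomial

section StripPoly

open Polynomial

variable {R : Type*} [CommRing R] {r : ℕ}

theorem stripSumSub_map {S : Type*} [CommRing S] (f : R →+* S) (a : ℤ → R) (lam : Fin r → ℕ)
    (m : ℕ) : f (stripSumSub a lam m) = stripSumSub (f ∘ a) lam m := by
  simp only [stripSumSub, map_sum, apply_ite f, map_zero, schurDet_map]

noncomputable def stripPoly (a : ℤ → R) (lam : Fin r → ℕ) : R[X] :=
  ∑ m ∈ range (r + 1), (-1) ^ m * X ^ m * C (stripSumSub a lam m)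

theorem stripPoly_map {S : Type*} [CommRing S] (f : R →+* S) (a : ℤ → R) (lam : Fin r → ℕ) :
    (stripPoly a lam).map f = stripPoly (f ∘ a) lam := by
  simp only [stripPoly, Polynomial.map_sum, Polynomial.map_mul, Polynomial.map_pow,
    Polynomial.map_neg, Polynomial.map_one, Polynomial.map_X, Polynomial.map_C,
    stripSumSub_map f a lam]

theorem eval_stripPoly (a : ℤ → R) (ha : ∀ n < 0, a n = 0) {lam : Fin r → ℕ}
    (hlam : Antitone lam) (t : R) :
    (stripPoly a lam).eval t =
      schurDet (fun n => a n - t * a (n - 1)) (fun k => (lam k : ℤ)) := by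
  simp only [stripPoly, eval_finsetSum, eval_mul, eval_pow, eval_neg, eval_one, eval_X, eval_C,
    schurDet_sub_mul_shift_eq_sum_stripSumSub a ha t hlam]

theorem natDegree_stripPoly_le (a : ℤ → R) (lam : Fin r → ℕ) :
    (stripPoly a lam).natDegree ≤ r :=
  natDegree_sum_le_of_forall_le _ _ fun m hm =>
    (show _ ≤ m by compute_degree).trans (mem_range_succ_iff.1 hm)

end StripPoly

section Specialization

open Polynomial

variable {R : Type*} [CommRing R] {r s : ℕ}

theorem natDegree_prod_sub_X_mul_le (x y : Fin s → R) :
    (∏ j, (C (x j) - X * C (y j))).natDegree ≤ s :=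
  (natDegree_prod_le _ _).trans <|
    (sum_le_card_nsmul _ _ 1 fun j _ => by compute_degree).trans (by simp)

theorem eval_prod_eq_eval_sum_stripPoly {H : ℤ → R} (hH : ∀ n < 0, H n = 0) (idx : Fin s → ℕ)
    {Λ : Finset (Fin r → ℕ)} (hΛ : ∀ lam ∈ Λ, Antitone lam) (a : (Fin r → ℕ) → R)
    (hexp : ∏ j, H (idx j) = ∑ lam ∈ Λ, a lam * schurDet H (fun k => (lam k : ℤ)))
    (φ : R →+* R) (t : R) (hφH : ∀ n, φ (H n) = H n - t * H (n - 1))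
    (hφa : ∀ lam ∈ Λ, φ (a lam) = a lam) :
    (∏ j, (C (H (idx j)) - X * C (H (idx j - 1)))).eval t =
      (∑ lam ∈ Λ, C (a lam) * stripPoly H lam).eval t := by
  have hφ : φ ∘ H = fun n => H n - t * H (n - 1) := funext hφH
  calc _ = φ (∏ j, H (idx j)) := by
        simp only [eval_prod, eval_sub, eval_mul, eval_C, eval_X, map_prod, hφH, mul_comm t]
    _ = ∑ lam ∈ Λ, a lam * schurDet (fun n => H n - t * H (n - 1)) (fun k => (lam k : ℤ)) := by
      rw [hexp, map_sum]
      exact sum_congr rfl fun lam hlam => by rw [map_mul, hφa lam hlam, schurDet_map, hφ]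
    _ = _ := by
      simp only [eval_finsetSum, eval_mul, eval_C]
      exact sum_congr rfl fun lam hlam => by rw [eval_stripPoly H hH (hΛ lam hlam)]

theorem prod_sub_X_mul_eq_sum_stripPoly {K : Type*} [CommRing K] [IsDomain K]
    {H : ℤ → MvPolynomial (Fin r) K} (hH : IsInvSeries r (MvPolynomial.esymm (Fin r) K) H)
    (hs : s ≤ r) (idx : Fin s → ℕ) {Λ : Finset (Fin r → ℕ)} (hΛ : ∀ lam ∈ Λ, Antitone lam)
    (a : (Fin r → ℕ) → K)
    (hexp : ∏ j, H (idx j) =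
      ∑ lam ∈ Λ, MvPolynomial.C (a lam) * schurDet H (fun k => (lam k : ℤ))) :
    ∏ j, (C (H (idx j)) - X * C (H (idx j - 1))) =
      ∑ lam ∈ Λ, C (MvPolynomial.C (a lam)) * stripPoly H lam := by
  have hH' : IsInvSeries (Fintype.card (Fin r)) (MvPolynomial.esymm (Fin r) K) H := by
    rwa [Fintype.card_fin]
  refine eq_of_natDegree_lt_card_of_eval_eq _ _
    (f := fun o : Option (Fin r) => o.elim 0 MvPolynomial.X) ?_ (fun o => ?_) ?_
  · rintro (_ | k) (_ | k') hkk' <;>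
      simp_all [eq_comm (a := (0 : MvPolynomial (Fin r) K)), MvPolynomial.X_ne_zero,
        MvPolynomial.X_injective.eq_iff]
  · obtain ⟨φ, hφ⟩ : ∃ φ : MvPolynomial (Fin r) K →ₐ[K] MvPolynomial (Fin r) K,
        ∀ n, φ (H n) = H n - o.elim 0 MvPolynomial.X * H (n - 1) := by
      cases o with
      | none => exact ⟨AlgHom.id K _, fun n => by simp⟩
      | some k => exact ⟨MvPolynomial.killVar k, MvPolynomial.killVar_of_isInvSeries hH' k⟩
    exact eval_prod_eq_eval_sum_stripPoly hH.1 idx hΛ _ hexp φ _ hφ fun lam _ => φ.commutes _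
  · rw [Fintype.card_option, Fintype.card_fin, max_lt_iff]
    exact ⟨(natDegree_prod_sub_X_mul_le _ _).trans_lt (by omega),
      (natDegree_sum_le_of_forall_le _ _ fun lam _ =>
        (natDegree_C_mul_le _ _).trans (natDegree_stripPoly_le H lam)).trans_lt (by omega)⟩

end Specialization

theorem stmt_11_general (r : ℕ)
    (e : ℕ → MvPolynomial (Fin r) ℚ)
    (he0 : e 0 = 1)
    (heX : ∀ i : Fin r, e ((i : ℕ) + 1) = MvPolynomial.X i)
    (h : ℤ → MvPolynomial (Fin r) ℚ)
    (hhneg : ∀ n : ℤ, n < 0 → h n = 0)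
    (hconv : ∀ n : ℤ,
      ∑ i ∈ Finset.range (r + 1),
          (-1 : MvPolynomial (Fin r) ℚ) ^ i * e i * h (n - (i : ℤ)) =
        if n = 0 then 1 else 0)
    (s : ℕ) (hs : s ≤ r)
    (idx : Fin s → ℕ)
    (Λ : Finset (Fin r → ℕ)) (hΛ : ∀ lam ∈ Λ, Antitone lam)
    (aQ : (Fin r → ℕ) → ℚ)
    (hexp : (∏ j : Fin s, h ((idx j : ℕ) : ℤ)) =
      ∑ lam ∈ Λ, MvPolynomial.C (aQ lam) * schurDet h (fun k => (lam k : ℤ))) :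
    (∏ j : Fin s, (Polynomial.C (h ((idx j : ℕ) : ℤ)) -
        Polynomial.X * Polynomial.C (h (((idx j : ℕ) : ℤ) - 1)))) =
      ∑ lam ∈ Λ, Polynomial.C ((MvPolynomial.C (aQ lam) : MvPolynomial (Fin r) ℚ)) *
        ∑ m ∈ Finset.range (r + 1),
          (-1 : Polynomial (MvPolynomial (Fin r) ℚ)) ^ m * Polynomial.X ^ m *
            Polynomial.C (stripSumSub h lam m) := by
  set ψ := MvPolynomial.aeval (R := ℚ) fun i : Fin r => MvPolynomial.esymm (Fin r) ℚ (i + 1)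
  have hψe : ∀ i ≤ r, ψ (e i) = MvPolynomial.esymm (Fin r) ℚ i := by
    rintro (_ | i) hi
    · rw [he0, map_one, MvPolynomial.esymm_zero]
    · rw [heX ⟨i, hi⟩, MvPolynomial.aeval_X]
  have hH : IsInvSeries r (MvPolynomial.esymm (Fin r) ℚ) (ψ ∘ h) :=
    (IsInvSeries.map ψ.toRingHom ⟨hhneg, hconv⟩).congr_left hψe
  have hexpψ : ∏ j : Fin s, (ψ ∘ h) (idx j) =
      ∑ lam ∈ Λ, MvPolynomial.C (aQ lam) * schurDet (ψ ∘ h) (fun k => (lam k : ℤ)) := by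
    have := congrArg ψ hexp
    rw [map_prod, map_sum] at this
    refine this.trans (sum_congr rfl fun lam _ => ?_)
    rw [map_mul, MvPolynomial.algHom_C, MvPolynomial.algebraMap_eq]
    exact congrArg _ (schurDet_map ψ.toRingHom h _)
  change _ = ∑ lam ∈ Λ, Polynomial.C (MvPolynomial.C (aQ lam)) * stripPoly h lam
  apply Polynomial.map_injective ψ.toRingHom (MvPolynomial.aeval_esymm_injective ℚ r)
  simp only [Polynomial.map_prod, Polynomial.map_sum, Polynomial.map_sub, Polynomial.map_mul,
    Polynomial.map_C, Polynomial.map_X, stripPoly_map, AlgHom.toRingHom_eq_coe,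
    AlgHom.coe_toRingHom, MvPolynomial.algHom_C, MvPolynomial.algebraMap_eq]
  exact prod_sub_X_mul_eq_sum_stripPoly hH hs idx hΛ aQ hexpψ

theorem stmt_11 (r : ℕ) (hr : 1 ≤ r)
    (e : ℕ → MvPolynomial (Fin r) ℚ)
    (he0 : e 0 = 1)
    (heX : ∀ i : Fin r, e ((i : ℕ) + 1) = MvPolynomial.X i)
    (heTop : ∀ i : ℕ, r < i → e i = 0)
    (h : ℤ → MvPolynomial (Fin r) ℚ)
    (hhneg : ∀ n : ℤ, n < 0 → h n = 0)
    (hconv : ∀ n : ℤ,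
      ∑ i ∈ Finset.range (r + 1),
          (-1 : MvPolynomial (Fin r) ℚ) ^ i * e i * h (n - (i : ℤ)) =
        if n = 0 then 1 else 0)
    (s : ℕ) (hs : s ≤ r)
    (idx : Fin s → ℕ) (hidx : ∀ j, 0 < idx j)
    (Λ : Finset (Fin r → ℕ)) (hΛ : ∀ lam ∈ Λ, Antitone lam)
    (aQ : (Fin r → ℕ) → ℚ)
    (hexp : (∏ j : Fin s, h ((idx j : ℕ) : ℤ)) =
      ∑ lam ∈ Λ, MvPolynomial.C (aQ lam) * schurDet h (fun k => (lam k : ℤ))) :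
    (∏ j : Fin s, (Polynomial.C (h ((idx j : ℕ) : ℤ)) -
        Polynomial.X * Polynomial.C (h (((idx j : ℕ) : ℤ) - 1)))) =
      ∑ lam ∈ Λ, Polynomial.C ((MvPolynomial.C (aQ lam) : MvPolynomial (Fin r) ℚ)) *
        ∑ m ∈ Finset.range (r + 1),
          (-1 : Polynomial (MvPolynomial (Fin r) ℚ)) ^ m * Polynomial.X ^ m *
            Polynomial.C (stripSumSub h lam m) :=
  stmt_11_general r e he0 heX h hhneg hconv s hs idx Λ hΛ aQ hexp
end

section
/- Let B_∞ = ℚ[h_1, h_2, …] be the polynomial ring over ℚ in countably many algebraically independent indeterminates h_n (n ≥ 1), with the conventions h_0 = 1 and h_n = 0 for n < 0, and let v be an indeterminate. Let G : B_∞ → B_∞[v] be the unique ℚ-algebra homomorphism determined by G(h_n) = h_n − v·h_{n−1} for all n ≥ 1. Then for every partition λ = (λ_1 ≥ … ≥ λ_k) of length k, G(Δ_λ(H)) = Σ_{j=0}^{k} (−1)^j v^j Δ_{λ−j}(H), where Δ_λ(H) := det(h_{λ_j − j + i})_{1≤i,j≤k} and Δ_{λ−j}(H) is the sum of Δ_μ(H)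 over all partitions μ = (λ_1 − i_1, …, λ_k − i_k) with each i_m ∈ {0,1}, Σ i_m = j, and μ nonincreasing with nonnegative parts. In particular the ℚ[v]-linear extension of the Schur-basis map Δ_λ(H) ↦ Σ_j (−1)^j v^j Δ_{λ−j}(H) is a ring homomorphism. -/
section SchurDet

variable {R : Type*} [CommRing R] {r : ℕ}

theorem schurDet_eq_det_rows (a : ℤ → R) (lam : Fin r → ℤ) :
    schurDet a lam = Matrix.det (Matrix.of fun j i : Fin r => a (lam j - j + i)) := by
  rw [schurDet, ← Matrix.det_transpose]
  rfl

theorem map_schurDet {S F : Type*} [CommRing S] [FunLike F R S] [RingHomClass F R S] (f : F)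
    (a : ℤ → R) (lam : Fin r → ℤ) : f (schurDet a lam) = schurDet (f ∘ a) lam := by
  change (f : R →+* S) _ = _
  rw [schurDet, RingHom.map_det]
  rfl

theorem schurDet_eq_zero_of_sub_eq (a : ℤ → R) {lam : Fin r → ℤ} {i j : Fin r} (hij : i ≠ j)
    (h : lam i - i = lam j - j) : schurDet a lam = 0 :=
  Matrix.det_zero_of_column_eq hij fun k => by simp only [Matrix.of_apply, h]

theorem schurDet_add_mul_shift (a : ℤ → R) (c : R) (lam : Fin r → ℤ) :
    schurDet (fun n => a n + c * a (n - 1)) lam =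
      ∑ S : Finset (Fin r), c ^ S.card * schurDet a (fun k => lam k - if k ∈ S then 1 else 0) := by
  classical
  let row (mu : Fin r → ℤ) : Fin r → Fin r → R := fun j i => a (mu j - j + i)
  have hsplit : (fun (j i : Fin r) => a (lam j - j + i) + c * a (lam j - j + i - 1)) =
      (fun j => c • row (fun k => lam k - 1) j) + row lam := by
    ext j i
    simp only [row, Pi.add_apply, Pi.smul_apply, smul_eq_mul]
    ring_nf
  have hpiece (S : Finset (Fin r)) :
      S.piecewise (fun j => c • row (fun k => lam k - 1) j) (row lam) =
        fun j => (if j ∈ S then c else 1) • row (fun k => lam k - if k ∈ S then 1 else 0) j := by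
    ext j i
    by_cases hj : j ∈ S <;> simp [row, hj]
  have hdet (M : Fin r → Fin r → R) : (Matrix.of M).det = Matrix.detRowAlternating M := rfl
  rw [schurDet_eq_det_rows]
  change (Matrix.of fun (j i : Fin r) => a (lam j - j + i) + c * a (lam j - j + i - 1)).det = _
  rw [hsplit, hdet, AlternatingMap.map_add_univ]
  refine Finset.sum_congr rfl fun S _ => ?_
  rw [hpiece, AlternatingMap.map_smul_univ, Fintype.prod_ite_mem, Finset.prod_const, smul_eq_mul,
    schurDet_eq_det_rows]
  rfl

theorem schurDet_sub_strip_eq_zero (a : ℤ → R) {lam : Fin r → ℤ} (hlam : Antitone lam)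
    {S : Finset (Fin r)} (hS : ¬ Antitone fun k => lam k - if k ∈ S then 1 else 0) :
    schurDet a (fun k => lam k - if k ∈ S then 1 else 0) = 0 := by
  cases r with
  | zero => exact absurd (fun i => i.elim0) hS
  | succ n =>
    obtain ⟨i, hi⟩ := not_forall.mp (mt Fin.antitone_iff_succ_le.mpr hS)
    have hle := hlam (Fin.castSucc_lt_succ (i := i)).le
    refine schurDet_eq_zero_of_sub_eq a (Fin.castSucc_lt_succ (i := i)).ne' ?_
    simp only [Fin.val_succ, Fin.val_castSucc, Nat.cast_add, Nat.cast_one] at hi hle ⊢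
    split_ifs at hi ⊢ <;> omega

theorem stripSumSub_eq_sum_powersetCard (a : ℤ → R) {lam : Fin r → ℕ} (hlam : Antitone lam)
    (hpos : ∀ k, 0 < lam k) (j : ℕ) :
    stripSumSub a lam j = ∑ S ∈ Finset.powersetCard j Finset.univ,
      schurDet a (fun k => (lam k : ℤ) - if k ∈ S then 1 else 0) := by
  refine Finset.sum_congr rfl fun S _ => ?_
  have hnonneg (k : Fin r) : (0 : ℤ) ≤ (lam k : ℤ) - if k ∈ S then 1 else 0 := by
    have := hpos k
    split_ifs <;> omega
  split_ifs with hS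
  · rfl
  · exact (schurDet_sub_strip_eq_zero a (Nat.mono_cast.comp_antitone hlam)
      fun hanti => hS ⟨hanti, hnonneg⟩).symm

end SchurDet

theorem stmt_19
    (h : ℤ → MvPolynomial ℕ+ ℚ)
    (hneg : ∀ n : ℤ, n < 0 → h n = 0)
    (h0 : h 0 = 1)
    (hX : ∀ i : ℕ+, h ((i : ℕ) : ℤ) = MvPolynomial.X i)
    (G : MvPolynomial ℕ+ ℚ →ₐ[ℚ] Polynomial (MvPolynomial ℕ+ ℚ))
    (hG : ∀ n : ℕ+, G (MvPolynomial.X n) =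
      Polynomial.C (h ((n : ℕ) : ℤ)) - Polynomial.X * Polynomial.C (h (((n : ℕ) : ℤ) - 1)))
    (k : ℕ) (lam : Fin k → ℕ) (hlam : Antitone lam) (hpos : ∀ m : Fin k, 0 < lam m) :
    G (schurDet h (fun m => (lam m : ℤ))) =
      ∑ j ∈ Finset.range (k + 1),
        (-1 : Polynomial (MvPolynomial ℕ+ ℚ)) ^ j * Polynomial.X ^ j *
          Polynomial.C (stripSumSub h lam j) := by
  have hGh : G ∘ h = fun n => Polynomial.C (h n) + (-Polynomial.X) * Polynomial.C (h (n - 1)) := by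
    funext n
    rcases lt_trichotomy n 0 with hn | rfl | hn
    · simp [hneg n hn, hneg (n - 1) (by omega)]
    · simp [h0, hneg (-1) (by norm_num)]
    · lift n to ℕ+ using hn
      simp only [Function.comp_apply, hX, hG]
      ring
  rw [map_schurDet, hGh, schurDet_add_mul_shift, ← Finset.powerset_univ, Finset.sum_powerset,
    Finset.card_univ, Fintype.card_fin]
  refine Finset.sum_congr rfl fun j _ => ?_
  rw [stripSumSub_eq_sum_powersetCard h hlam hpos, map_sum, Finset.mul_sum]
  refine Finset.sum_congr rfl fun S hS => ?_
  rw [(Finset.mem_powersetCard.mp hS).2, map_schurDet, Function.comp_def]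
  ring
end
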